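/- Every satisfiable PDL(k,n) formula has a countable model; that is, if a PDL(k,n) formula φ is satisfied at some world of some Kripke structure, then there exist a Kripke structure whose set of worlds is countable and a world of it at which φ is satisfied. -/
import Mathlib


/-- The "kind" of a letter in an `n`-stack call-return alphabet: each letter is
either a call letter of stack `i`, a return letter of stack `i`, or internal. -/
inductive SymKind (n : ℕ) where
  | call (i : Fin n)
  | ret (i : Fin n)
  | internal
deriving DecidableEq

/-- A multi-stack visibly pushdown automaton over an `n`-stack call-return alphabet,
given by the letter type `A` together with the partition `kind : A → SymKind n`. -/
structure MVPA (A : Type) (n : ℕ) (kind : A → SymKind n) where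
  /-- finite set of states -/
  Q : Type
  [finQ : Fintype Q]
  /-- initial states -/
  QI : Set Q
  /-- finite stack alphabet -/
  Γ : Type
  [finΓ : Fintype Γ]
  /-- distinguished bottom-of-stack symbol -/
  bot : Γ
  /-- push transitions `(q, a, q', γ)` for call letters `a` -/
  δpush : Q → A → Q → Γ → Prop
  /-- pop transitions `(q, a, γ, q')` for return letters `a` -/
  δpop : Q → A → Γ → Q → Prop
  /-- internal transitions `(q, a, q')` for internal letters `a` -/
  δint : Q → A → Q → Prop
  /-- final states -/
  QF : Set Q
  push_call : ∀ q a q' γ, δpush q a q' γ → (∃ i, kind a = .call i) ∧ γ ≠ bot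
  pop_ret : ∀ q a γ q', δpop q a γ q' → ∃ i, kind a = .ret i
  int_internal : ∀ q a q', δint q a q' → kind a = .internal

namespace MVPA

variable {A : Type} {n : ℕ} {kind : A → SymKind n}

/-- A configuration: a state together with the contents of the `n` stacks.
A stack is represented by the list of its symbols above the (implicit) bottom
symbol `⊥`; i.e. a stack word `γ₁⋯γ_m⊥ ∈ (Γ∖{⊥})*·{⊥}` is represented
as the list `[γ₁, …, γ_m]`. -/
abbrev Config (M : MVPA A n kind) : Type := M.Q × (Fin n → List M.Γ)

/-- One step of the automaton on letter `a`. -/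
inductive Step (M : MVPA A n kind) : M.Config → A → M.Config → Prop where
  | push {q a q' γ C i} : kind a = .call i → M.δpush q a q' γ →
      Step M (q, C) a (q', Function.update C i (γ :: C i))
  | popEmpty {q a q' C i} : kind a = .ret i → M.δpop q a M.bot q' → C i = [] →
      Step M (q, C) a (q', C)
  | pop {q a γ q'} {C C' : Fin n → List M.Γ} {i} : kind a = .ret i → M.δpop q a γ q' →
      γ ≠ M.bot → C i = γ :: C' i → (∀ j, j ≠ i → C' j = C j) →
      Step M (q, C) a (q', C')
  | internal {q a q' C} : kind a = .internal → M.δint q a q' →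
      Step M (q, C) a (q', C)

/-- A run of the automaton on a word, from one configuration to another. -/
inductive Run (M : MVPA A n kind) : M.Config → List A → M.Config → Prop where
  | nil (c) : Run M c [] c
  | cons {c₁ a c₂ w c₃} : Step M c₁ a c₂ → Run M c₂ w c₃ → Run M c₁ (a :: w) c₃

/-- There is an accepting run of `M` on `w`: a run starting in an initial state with
all stacks empty (i.e. containing just `⊥`) and ending in a final state. -/
def Accepts (M : MVPA A n kind) (w : List A) : Prop :=
  ∃ q₀ ∈ M.QI, ∃ c : M.Config, Run M (q₀, fun _ => []) w c ∧ c.1 ∈ M.QF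

end MVPA

/-- A word is a phase if all return letters occurring in it belong to a single `Σ^i_r`. -/
def IsPhase {A : Type} {n : ℕ} (kind : A → SymKind n) (w : List A) : Prop :=
  ∃ i : ℕ, ∀ a ∈ w, ∀ j : Fin n, kind a = .ret j → (j : ℕ) = i

/-- A word is a `k`-phase if it is a concatenation of at most `k` phases. -/
def IsKPhase {A : Type} {n : ℕ} (kind : A → SymKind n) (k : ℕ) (w : List A) : Prop :=
  ∃ ws : List (List A), ws.length ≤ k ∧ (∀ u ∈ ws, IsPhase kind u) ∧ ws.flatten = w

namespace MVPA

variable {A : Type} {n : ℕ} {kind : A → SymKind n}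

/-- The language of `M`, viewed as a `k`-MVPA: the set of `k`-phase words on which
`M` has an accepting run. -/
def lang (M : MVPA A n kind) (k : ℕ) : Set (List A) :=
  {w | IsKPhase kind k w ∧ M.Accepts w}

/-- `M` is deterministic: a unique initial state, and for each state `q`, letter `a`
and stack symbol `γ`, at most one transition of `δ` is applicable. -/
def Deterministic (M : MVPA A n kind) : Prop :=
  (∃ q, M.QI = {q}) ∧
  (∀ q a q₁ γ₁ q₂ γ₂, M.δpush q a q₁ γ₁ → M.δpush q a q₂ γ₂ → q₁ = q₂ ∧ γ₁ = γ₂) ∧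
  (∀ q a γ q₁ q₂, M.δpop q a γ q₁ → M.δpop q a γ q₂ → q₁ = q₂) ∧
  (∀ q a q₁ q₂, M.δint q a q₁ → M.δint q a q₂ → q₁ = q₂)

end MVPA


/-- Formulas of `PDL(k, n)` over atomic propositions `P` and an `n`-stack call-return
alphabet given by letters `A` with partition `kind`.  Tests are formulas followed by
`?`; a finite set `Ψ` of tests occurring in a program is represented by a finite family
`tests : Fin m → Formula`, the test `(tests i)?` being referred to by the letter
`Sum.inr i` of the extended alphabet `A ⊕ Fin m`.  A program is either a regular
expression over `Σ ∪ Ψ` or a `k`-MVPA over the `n`-stack call-return alphabet in which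
the tests are additional internal letters. -/
inductive Formula (P A : Type) (n : ℕ) (kind : A → SymKind n) : Type 1 where
  | tru : Formula P A n kind
  | atom (p : P) : Formula P A n kind
  | orF (φ ψ : Formula P A n kind) : Formula P A n kind
  | negF (φ : Formula P A n kind) : Formula P A n kind
  | diamRe (m : ℕ) (tests : Fin m → Formula P A n kind)
      (χ : RegularExpression (A ⊕ Fin m))
      (φ : Formula P A n kind) : Formula P A n kind
  | diamAut (m : ℕ) (tests : Fin m → Formula P A n kind)
      (M : MVPA (A ⊕ Fin m) n (Sum.elim kind fun _ => SymKind.internal))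
      (φ : Formula P A n kind) : Formula P A n kind

/-- A Kripke structure: worlds `X`, a binary relation `→_a` on `X` for every letter
`a ∈ Σ`, and a valuation assigning to every world a set of atomic propositions. -/
structure Kripke (P A : Type) where
  X : Type
  R : A → X → X → Prop
  val : X → Set P

/-- The relation `[[w]]` of a word `w` over the alphabet `Σ` extended by tests
(`Sum.inr i` being the `i`-th test, holding at the worlds in `T i`):
`[[a]] = →_a`, `[[ψ?]] = {(x,x) : T x}`, composed along `w`. -/
def mixRel {X A : Type} {m : ℕ} (R : A → X → X → Prop) (T : Fin m → X → Prop) :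
    List (A ⊕ Fin m) → X → X → Prop
  | [] => fun x y => x = y
  | .inl a :: w => fun x z => ∃ y, R a x y ∧ mixRel R T w y z
  | .inr i :: w => fun x z => T i x ∧ mixRel R T w x z

/-- The satisfaction relation `x ∈ [[φ]]_K` of `PDL(k, n)`. -/
def sat (k : ℕ) {P A : Type} {n : ℕ} {kind : A → SymKind n} (K : Kripke P A) :
    Formula P A n kind → K.X → Prop
  | .tru, _ => True
  | .atom p, x => p ∈ K.val x
  | .orF φ ψ, x => sat k K φ x ∨ sat k K ψ x
  | .negF φ, x => ¬ sat k K φ x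
  | .diamRe _ tests χ φ, x => ∃ w ∈ χ.matches', ∃ y,
      mixRel K.R (fun i z => sat k K (tests i) z) w x y ∧ sat k K φ y
  | .diamAut _ tests M φ, x => ∃ w ∈ M.lang k, ∃ y,
      mixRel K.R (fun i z => sat k K (tests i) z) w x y ∧ sat k K φ y

section Aux

open Classical

variable {P A : Type} {n : ℕ} {kind : A → SymKind n}

/-- The restriction of a Kripke structure to a set of worlds. -/
def subK (K : Kripke P A) (S : Set K.X) : Kripke P A :=
  ⟨S, fun a x y => K.R a x.1 y.1, fun x => K.val x.1⟩

lemma mixRel_mono {X B : Type} {m : ℕ} {R R' : B → X → X → Prop}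
    {T T' : Fin m → X → Prop} (hR : ∀ a x y, R a x y → R' a x y)
    (hT : ∀ i x, T i x → T' i x) :
    ∀ (w : List (B ⊕ Fin m)) (x y : X), mixRel R T w x y → mixRel R' T' w x y := by
  intro w
  induction w with
  | nil => intro x y h; exact h
  | cons a w ih =>
    cases a with
    | inl a =>
      rintro x y ⟨y₁, h₁, h₂⟩
      exact ⟨y₁, hR _ _ _ h₁, ih _ _ h₂⟩
    | inr i =>
      rintro x y ⟨h₁, h₂⟩
      exact ⟨hT _ _ h₁, ih _ _ h₂⟩

lemma mixRel_finite_trace {X B : Type} {m : ℕ} {R : B → X → X → Prop}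
    {T : Fin m → X → Prop} :
    ∀ (w : List (B ⊕ Fin m)) (x y : X), mixRel R T w x y →
      ∃ s : Set X, s.Finite ∧ x ∈ s ∧ y ∈ s ∧
        mixRel (fun a u v => R a u v ∧ u ∈ s ∧ v ∈ s) (fun i u => T i u ∧ u ∈ s) w x y := by
  intro w
  induction w with
  | nil =>
    intro x y h
    cases h
    exact ⟨{x}, Set.finite_singleton x, rfl, rfl, rfl⟩
  | cons a w ih =>
    cases a with
    | inl a =>
      rintro x y ⟨y₁, h₁, h₂⟩
      obtain ⟨s, hfin, hy₁, hy, hmix⟩ := ih _ _ h₂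
      refine ⟨insert x s, hfin.insert x, Set.mem_insert _ _, Set.mem_insert_of_mem _ hy,
        ⟨y₁, ⟨h₁, Set.mem_insert _ _, Set.mem_insert_of_mem _ hy₁⟩, ?_⟩⟩
      exact mixRel_mono (fun a u v ⟨h, hu, hv⟩ =>
          ⟨h, Set.mem_insert_of_mem _ hu, Set.mem_insert_of_mem _ hv⟩)
        (fun i u ⟨h, hu⟩ => ⟨h, Set.mem_insert_of_mem _ hu⟩) w _ _ hmix
    | inr i =>
      rintro x y ⟨h₁, h₂⟩
      obtain ⟨s, hfin, hx, hy, hmix⟩ := ih _ _ h₂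
      exact ⟨s, hfin, hx, hy, ⟨h₁, hx⟩, hmix⟩

lemma mixRel_down {K : Kripke P A} {S : Set K.X} {m : ℕ}
    {T : Fin m → K.X → Prop} {T' : Fin m → ↥S → Prop}
    (hT : ∀ i (x : ↥S), T' i x → T i x.1) :
    ∀ (w : List (A ⊕ Fin m)) (x y : ↥S),
      mixRel (subK K S).R T' w x y → mixRel K.R T w x.1 y.1 := by
  intro w
  induction w with
  | nil => intro x y h; cases h; rfl
  | cons a w ih =>
    cases a with
    | inl a =>
      rintro x y ⟨y₁, h₁, h₂⟩
      exact ⟨y₁.1, h₁, ih _ _ h₂⟩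
    | inr i =>
      rintro x y ⟨h₁, h₂⟩
      exact ⟨hT _ _ h₁, ih _ _ h₂⟩

lemma mixRel_up {K : Kripke P A} {S s : Set K.X} (hsS : s ⊆ S) {m : ℕ}
    {T : Fin m → K.X → Prop} {T' : Fin m → ↥S → Prop}
    (hT : ∀ i (u : K.X) (hu : u ∈ S), T i u → T' i ⟨u, hu⟩) :
    ∀ (w : List (A ⊕ Fin m)) (x y : K.X) (hx : x ∈ S) (hy : y ∈ S),
      mixRel (fun a u v => K.R a u v ∧ u ∈ s ∧ v ∈ s) (fun i u => T i u ∧ u ∈ s) w x y →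
      mixRel (subK K S).R T' w ⟨x, hx⟩ ⟨y, hy⟩ := by
  intro w
  induction w with
  | nil =>
    intro x y hx hy h
    cases h; rfl
  | cons a w ih =>
    cases a with
    | inl a =>
      rintro x y hx hy ⟨y₁, ⟨h₁, _, hy₁⟩, h₂⟩
      exact ⟨⟨y₁, hsS hy₁⟩, h₁, ih _ _ _ _ h₂⟩
    | inr i =>
      rintro x y hx hy ⟨⟨h₁, _⟩, h₂⟩
      exact ⟨hT _ _ _ h₁, ih _ _ _ _ h₂⟩

lemma exists_fin_wit {K : Kripke P A} {m : ℕ} {L : Set (List (A ⊕ Fin m))}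
    {T : Fin m → K.X → Prop} {Φ : K.X → Prop} {x : K.X}
    (h : ∃ w ∈ L, ∃ y, mixRel K.R T w x y ∧ Φ y) :
    ∃ s : Set K.X, s.Finite ∧ ∃ w ∈ L, ∃ y, y ∈ s ∧ Φ y ∧
      mixRel (fun a u v => K.R a u v ∧ u ∈ s ∧ v ∈ s) (fun i u => T i u ∧ u ∈ s) w x y := by
  obtain ⟨w, hw, y, hmix, hy⟩ := h
  obtain ⟨s, hfin, _, hys, hmix'⟩ := mixRel_finite_trace w x y hmix
  exact ⟨s, hfin, w, hw, y, hys, hy, hmix'⟩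

/-- A chosen finite set of witness worlds for a diamond formula at a world. -/
noncomputable def diamWit (K : Kripke P A) {m : ℕ} (L : Set (List (A ⊕ Fin m)))
    (T : Fin m → K.X → Prop) (Φ : K.X → Prop) (x : K.X) : Set K.X :=
  if h : ∃ w ∈ L, ∃ y, mixRel K.R T w x y ∧ Φ y then (exists_fin_wit h).choose else ∅

lemma diamWit_finite (K : Kripke P A) {m : ℕ} (L : Set (List (A ⊕ Fin m)))
    (T : Fin m → K.X → Prop) (Φ : K.X → Prop) (x : K.X) : (diamWit K L T Φ x).Finite := by
  unfold diamWit
  split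
  · exact (exists_fin_wit (by assumption)).choose_spec.1
  · exact Set.finite_empty

lemma diamWit_spec {K : Kripke P A} {m : ℕ} {L : Set (List (A ⊕ Fin m))}
    {T : Fin m → K.X → Prop} {Φ : K.X → Prop} {x : K.X}
    (h : ∃ w ∈ L, ∃ y, mixRel K.R T w x y ∧ Φ y) :
    ∃ w ∈ L, ∃ y, y ∈ diamWit K L T Φ x ∧ Φ y ∧
      mixRel (fun a u v => K.R a u v ∧ u ∈ diamWit K L T Φ x ∧ v ∈ diamWit K L T Φ x)
        (fun i u => T i u ∧ u ∈ diamWit K L T Φ x) w x y := by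
  have : diamWit K L T Φ x = (exists_fin_wit h).choose := dif_pos h
  rw [this]
  exact (exists_fin_wit h).choose_spec.2

/-- The Skolem witnesses for a formula at a world. -/
noncomputable def wit (k : ℕ) (K : Kripke P A) : Formula P A n kind → K.X → Set K.X
  | .tru, _ => ∅
  | .atom _, _ => ∅
  | .orF φ ψ, x => wit k K φ x ∪ wit k K ψ x
  | .negF φ, x => wit k K φ x
  | .diamRe _ tests χ φ, x =>
      wit k K φ x ∪ (⋃ i, wit k K (tests i) x) ∪
        diamWit K χ.matches' (fun i z => sat k K (tests i) z) (sat k K φ) x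
  | .diamAut _ tests M φ, x =>
      wit k K φ x ∪ (⋃ i, wit k K (tests i) x) ∪
        diamWit K (M.lang k) (fun i z => sat k K (tests i) z) (sat k K φ) x

lemma wit_finite (k : ℕ) (K : Kripke P A) (ψ : Formula P A n kind) (x : K.X) :
    (wit k K ψ x).Finite := by
  induction ψ generalizing x with
  | tru => exact Set.finite_empty
  | atom p => exact Set.finite_empty
  | orF φ ψ ih₁ ih₂ => exact (ih₁ x).union (ih₂ x)
  | negF φ ih => exact ih x
  | diamRe m tests χ φ ihT ihφ =>
    exact ((ihφ x).union (Set.finite_iUnion fun i => ihT i x)).union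
      (diamWit_finite _ _ _ _ _)
  | diamAut m tests M φ ihT ihφ =>
    exact ((ihφ x).union (Set.finite_iUnion fun i => ihT i x)).union
      (diamWit_finite _ _ _ _ _)

lemma sat_subK {K : Kripke P A} {S : Set K.X} (k : ℕ) :
    ∀ ψ : Formula P A n kind, (∀ x ∈ S, wit k K ψ x ⊆ S) →
      ∀ x : ↥S, sat k (subK K S) ψ x ↔ sat k K ψ x.1 := by
  intro ψ
  induction ψ with
  | tru => intro _ x; simp [sat]
  | atom p => intro _ x; exact Iff.rfl
  | orF φ ψ ih₁ ih₂ =>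
    intro hclo x
    have h₁ := ih₁ (fun x hx => (Set.subset_union_left).trans (hclo x hx)) x
    have h₂ := ih₂ (fun x hx => (Set.subset_union_right).trans (hclo x hx)) x
    simp only [sat]; rw [h₁, h₂]
  | negF φ ih =>
    intro hclo x
    have h₁ := ih hclo x
    simp only [sat]; rw [h₁]
  | diamRe m tests χ φ ihT ihφ =>
    intro hclo x
    have hcT : ∀ i, ∀ x ∈ S, wit k K (tests i) x ⊆ S := fun i x hx =>
      ((Set.subset_iUnion (fun i => wit k K (tests i) x) i).trans
        (Set.subset_union_right.trans Set.subset_union_left)).trans (hclo x hx)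
    have hcφ : ∀ x ∈ S, wit k K φ x ⊆ S := fun x hx =>
      (Set.subset_union_left.trans Set.subset_union_left).trans (hclo x hx)
    have htest : ∀ i (z : ↥S),
        sat k (subK K S) (tests i) z ↔ sat k K (tests i) z.1 := fun i => ihT i (hcT i)
    have hφ := ihφ hcφ
    constructor
    · rintro ⟨w, hw, y, hmix, hy⟩
      exact ⟨w, hw, y.1, mixRel_down (fun i z h => (htest i z).1 h) w x y hmix,
        (hφ y).1 hy⟩
    · intro h
      have h' : ∃ w ∈ χ.matches', ∃ y,
          mixRel K.R (fun i z => sat k K (tests i) z) w x.1 y ∧ sat k K φ y := h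
      obtain ⟨w, hw, y, hys, hy, hmix⟩ := diamWit_spec h'
      have hsub : diamWit K χ.matches' (fun i z => sat k K (tests i) z) (sat k K φ) x.1
          ⊆ S := Set.subset_union_right.trans (hclo x.1 x.2)
      have hyS : y ∈ S := hsub hys
      refine ⟨w, hw, ⟨y, hyS⟩, ?_, (hφ ⟨y, hyS⟩).2 hy⟩
      exact mixRel_up hsub (fun i u hu h => (htest i ⟨u, hu⟩).2 h) w x.1 y x.2 hyS hmix
  | diamAut m tests M φ ihT ihφ =>
    intro hclo x
    have hcT : ∀ i, ∀ x ∈ S, wit k K (tests i) x ⊆ S := fun i x hx =>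
      ((Set.subset_iUnion (fun i => wit k K (tests i) x) i).trans
        (Set.subset_union_right.trans Set.subset_union_left)).trans (hclo x hx)
    have hcφ : ∀ x ∈ S, wit k K φ x ⊆ S := fun x hx =>
      (Set.subset_union_left.trans Set.subset_union_left).trans (hclo x hx)
    have htest : ∀ i (z : ↥S),
        sat k (subK K S) (tests i) z ↔ sat k K (tests i) z.1 := fun i => ihT i (hcT i)
    have hφ := ihφ hcφ
    constructor
    · rintro ⟨w, hw, y, hmix, hy⟩
      exact ⟨w, hw, y.1, mixRel_down (fun i z h => (htest i z).1 h) w x y hmix,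
        (hφ y).1 hy⟩
    · intro h
      have h' : ∃ w ∈ M.lang k, ∃ y,
          mixRel K.R (fun i z => sat k K (tests i) z) w x.1 y ∧ sat k K φ y := h
      obtain ⟨w, hw, y, hys, hy, hmix⟩ := diamWit_spec h'
      have hsub : diamWit K (M.lang k) (fun i z => sat k K (tests i) z) (sat k K φ) x.1
          ⊆ S := Set.subset_union_right.trans (hclo x.1 x.2)
      have hyS : y ∈ S := hsub hys
      refine ⟨w, hw, ⟨y, hyS⟩, ?_, (hφ ⟨y, hyS⟩).2 hy⟩
      exact mixRel_up hsub (fun i u hu h => (htest i ⟨u, hu⟩).2 h) w x.1 y x.2 hyS hmix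

end Aux

/-- Every satisfiable `PDL(k, n)` formula has a countable model. -/
theorem satisfiable_has_countable_model (P A : Type) [Countable P] [Fintype A]
    (n : ℕ) (kind : A → SymKind n) (k : ℕ) (hk : 1 ≤ k)
    (φ : Formula P A n kind)
    (hsat : ∃ (K : Kripke P A) (x : K.X), sat k K φ x) :
    ∃ (K : Kripke P A) (x : K.X), Countable K.X ∧ sat k K φ x := by
  obtain ⟨K, x₀, hx₀⟩ := hsat
  classical
  -- iterated Skolem closure
  let g : ℕ → Set K.X := fun N => Nat.rec {x₀} (fun _ s => s ∪ ⋃ x ∈ s, wit k K φ x) N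
  have hgmono : ∀ N, g N ⊆ g (N + 1) := fun N => Set.subset_union_left
  have hgcount : ∀ N, (g N).Countable := by
    intro N
    induction N with
    | zero => exact Set.countable_singleton x₀
    | succ N ih =>
      exact ih.union (Set.Countable.biUnion ih fun x _ => (wit_finite k K φ x).countable)
  set S : Set K.X := ⋃ N, g N with hS
  have hScount : S.Countable := Set.countable_iUnion hgcount
  have hx₀S : x₀ ∈ S := Set.mem_iUnion.2 ⟨0, rfl⟩
  have hclo : ∀ x ∈ S, wit k K φ x ⊆ S := by
    intro x hx
    obtain ⟨N, hN⟩ := Set.mem_iUnion.1 hx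
    intro y hy
    exact Set.mem_iUnion.2 ⟨N + 1, Set.mem_union_right _ (Set.mem_biUnion hN hy)⟩
  refine ⟨subK K S, ⟨x₀, hx₀S⟩, hScount.to_subtype, ?_⟩
  exact (sat_subK k φ hclo ⟨x₀, hx₀S⟩).2 hx₀
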